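/- In the swap-extended guest-message system with the authentication-tag check (swap-in may restore only the snapshot whose tag equals the current root-metadata entry rmd), the nonces of all encryption events logged along any trace are pairwise distinct; i.e., page swapping preserves the no-key–nonce-reuse property. -/

import Mathlib

/-- The two honest agents exchanging guest messages. -/
inductive Agent : Type
  | Guest
  | FW
deriving DecidableEq

/-- The phase of the guest: idle, or waiting for a firmware response. -/
inductive Phase : Type
  | Idle
  | Waiting
deriving DecidableEq

/-- Whether the guest is currently active or swapped out. -/
inductive Mode : Type
  | Active
  | Swapped
deriving DecidableEq

/-- The core state of the guest-message counter system: the guest's message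
counter, the firmware's message counter, and the phase. -/
structure Core : Type where
  gc : ℕ
  fc : ℕ
  ph : Phase

/-- A state of the swap-extended guest-message system: the core counter state,
the mode, the root-metadata entry `rmd` (an authentication tag), and the list of
saved snapshots `(tag, core state)` with pairwise distinct tags. -/
structure SwSt : Type where
  core : Core
  mode : Mode
  rmd : ℕ
  snaps : List (ℕ × Core)

/-- An encryption event: the logging agent, the nonce used, and the payload. -/
abbrev EncEvent (M : Type) : Type := Agent × ℕ × M

/-- `ReachSw M st evs`: the swap-extended guest-message system (with the
authentication-tag check on swap-in: only the snapshot whose tag equals the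
current root-metadata entry `rmd` may be restored) reaches state `st` from the
initial state having logged the encryption events `evs`, in order. -/
inductive ReachSw (M : Type) : SwSt → List (EncEvent M) → Prop
  | init : ReachSw M ⟨⟨0, 0, Phase.Idle⟩, Mode.Active, 0, []⟩ []
  | send {gc fc rmd : ℕ} {snaps : List (ℕ × Core)} {evs : List (EncEvent M)} (m : M) :
      ReachSw M ⟨⟨gc, fc, Phase.Idle⟩, Mode.Active, rmd, snaps⟩ evs →
      ReachSw M ⟨⟨gc, fc, Phase.Waiting⟩, Mode.Active, rmd, snaps⟩
        (evs ++ [(Agent.Guest, gc, m)])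
  | serve {gc fc rmd : ℕ} {snaps : List (ℕ × Core)} {evs : List (EncEvent M)} (m : M) :
      ReachSw M ⟨⟨gc, fc, Phase.Waiting⟩, Mode.Active, rmd, snaps⟩ evs → fc = gc →
      ReachSw M ⟨⟨gc, fc + 2, Phase.Waiting⟩, Mode.Active, rmd, snaps⟩
        (evs ++ [(Agent.FW, fc + 1, m)])
  | recv {gc fc rmd : ℕ} {snaps : List (ℕ × Core)} {evs : List (EncEvent M)} :
      ReachSw M ⟨⟨gc, fc, Phase.Waiting⟩, Mode.Active, rmd, snaps⟩ evs → fc = gc + 2 →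
      ReachSw M ⟨⟨gc + 2, fc, Phase.Idle⟩, Mode.Active, rmd, snaps⟩ evs
  | swapOut {c : Core} {rmd : ℕ} {snaps : List (ℕ × Core)} {evs : List (EncEvent M)}
      (t : ℕ) :
      ReachSw M ⟨c, Mode.Active, rmd, snaps⟩ evs →
      t ∉ snaps.map Prod.fst →
      ReachSw M ⟨c, Mode.Swapped, t, (t, c) :: snaps⟩ evs
  | swapIn {c : Core} {rmd : ℕ} {snaps : List (ℕ × Core)} {evs : List (EncEvent M)}
      (s : Core) :
      ReachSw M ⟨c, Mode.Swapped, rmd, snaps⟩ evs →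
      (rmd, s) ∈ snaps →
      ReachSw M ⟨s, Mode.Active, rmd, snaps⟩ evs

/-- If the keys of an association list are nodup, values with equal keys are equal. -/
lemma eq_of_mem_nodup_keys {α β : Type _} {l : List (α × β)}
    (h : (l.map Prod.fst).Nodup) {a : α} {b c : β}
    (h1 : (a, b) ∈ l) (h2 : (a, c) ∈ l) : b = c := by
  induction l with
  | nil => simp at h1
  | cons x xs ih =>
    simp only [List.map_cons, List.nodup_cons] at h
    rcases List.mem_cons.1 h1 with h1' | h1' <;>
      rcases List.mem_cons.1 h2 with h2' | h2'
    · rw [← h1'] at h2'; exact (Prod.mk.injEq _ _ _ _ ▸ h2').2.symm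
    · exact absurd (by rw [← h1']; simpa using List.mem_map_of_mem (f := Prod.fst) h2') h.1
    · exact absurd (by rw [← h2']; simpa using List.mem_map_of_mem (f := Prod.fst) h1') h.1
    · exact ih h.2 h1' h2'

/-- Core invariant relating the counters/phase to the logged events. -/
def CoreInv {M : Type} (c : Core) (evs : List (EncEvent M)) : Prop :=
  Even c.gc ∧ Even c.fc ∧ (evs.map (fun e => e.2.1)).Nodup ∧
  (∀ e ∈ evs, e.1 = Agent.Guest →
    Even e.2.1 ∧ e.2.1 ≤ c.gc ∧ (c.ph = Phase.Idle → e.2.1 < c.gc)) ∧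
  (∀ e ∈ evs, e.1 = Agent.FW → ¬ Even e.2.1 ∧ e.2.1 < c.fc)

lemma reachSw_inv {M : Type} {st : SwSt} {evs : List (EncEvent M)}
    (h : ReachSw M st evs) :
    (st.snaps.map Prod.fst).Nodup ∧
    (st.mode = Mode.Swapped → (st.rmd, st.core) ∈ st.snaps) ∧
    CoreInv st.core evs := by
  induction h with
  | init =>
    refine ⟨by simp, by simp, ?_⟩
    exact ⟨Even.zero, Even.zero, by simp, by simp, by simp⟩
  | @send gc fc rmd snaps evs m _ ih =>
    obtain ⟨hsn, _, hg, hf, hnd, hG, hF⟩ := ih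
    dsimp only [CoreInv] at hg hf hnd hG hF ⊢
    refine ⟨hsn, by simp, hg, hf, ?_, ?_, ?_⟩
    · rw [List.map_append, List.nodup_append]
      refine ⟨hnd, by simp, ?_⟩
      intro a ha
      simp only [List.mem_map] at ha
      obtain ⟨e, he, rfl⟩ := ha
      simp only [List.map_cons, List.map_nil, List.mem_singleton]
      intro b hb hcontra
      subst hb
      cases e1 : e.1 with
      | Guest =>
        have := (hG e he e1).2.2 rfl
        omega
      | FW =>
        have := (hF e he e1).1
        rw [hcontra] at this
        exact this hg
    · intro e he h1
      rcases List.mem_append.1 he with he' | he'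
      · obtain ⟨h2, h3, _⟩ := hG e he' h1
        exact ⟨h2, h3, by simp⟩
      · simp only [List.mem_singleton] at he'
        subst he'
        exact ⟨hg, le_refl _, by simp⟩
    · intro e he h1
      rcases List.mem_append.1 he with he' | he'
      · exact hF e he' h1
      · simp only [List.mem_singleton] at he'
        subst he'
        simp at h1
  | @serve gc fc rmd snaps evs m _ hfc ih =>
    obtain ⟨hsn, _, hg, hf, hnd, hG, hF⟩ := ih
    dsimp only [CoreInv] at hg hf hnd hG hF ⊢
    refine ⟨hsn, by simp, hg, by simpa using hf.add even_two, ?_, ?_, ?_⟩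
    · rw [List.map_append, List.nodup_append]
      refine ⟨hnd, by simp, ?_⟩
      intro a ha
      simp only [List.mem_map] at ha
      obtain ⟨e, he, rfl⟩ := ha
      simp only [List.map_cons, List.map_nil, List.mem_singleton]
      intro b hb hcontra
      subst hb
      cases e1 : e.1 with
      | Guest =>
        have := (hG e he e1).1
        rw [hcontra] at this
        rcases hf with ⟨k, hk⟩
        rcases this with ⟨j, hj⟩
        omega
      | FW =>
        have := (hF e he e1).2
        omega
    · intro e he h1
      rcases List.mem_append.1 he with he' | he'
      · obtain ⟨h2, h3, _⟩ := hG e he' h1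
        exact ⟨h2, h3, by simp⟩
      · simp only [List.mem_singleton] at he'
        subst he'
        simp at h1
    · intro e he h1
      rcases List.mem_append.1 he with he' | he'
      · obtain ⟨h2, h3⟩ := hF e he' h1
        exact ⟨h2, by omega⟩
      · simp only [List.mem_singleton] at he'
        subst he'
        dsimp only
        refine ⟨?_, by omega⟩
        rcases hf with ⟨k, hk⟩
        intro ⟨j, hj⟩
        omega
  | @recv gc fc rmd snaps evs _ hfc ih =>
    obtain ⟨hsn, _, hg, hf, hnd, hG, hF⟩ := ih
    dsimp only [CoreInv] at hg hf hnd hG hF ⊢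
    refine ⟨hsn, by simp, by simpa using hg.add even_two, hf, hnd, ?_, hF⟩
    intro e he h1
    obtain ⟨h2, h3, _⟩ := hG e he h1
    exact ⟨h2, by omega, fun _ => by omega⟩
  | @swapOut c rmd snaps evs t _ ht ih =>
    obtain ⟨hsn, _, hcore⟩ := ih
    exact ⟨by simpa [ht] using hsn, fun _ => by simp, hcore⟩
  | @swapIn c rmd snaps evs s _ hmem ih =>
    obtain ⟨hsn, hsw, hcore⟩ := ih
    have : c = s := eq_of_mem_nodup_keys hsn (hsw rfl) hmem
    subst this
    exact ⟨hsn, by simp, hcore⟩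

/-- In the swap-extended guest-message system with the authentication-tag check,
the nonces of all encryption events logged along any trace are pairwise
distinct; i.e., page swapping preserves the no-key–nonce-reuse property. -/
theorem swap_preserves_no_key_nonce_reuse (M : Type) (st : SwSt)
    (evs : List (EncEvent M)) (h : ReachSw M st evs) :
    (evs.map (fun e => e.2.1)).Nodup := by
  exact (reachSw_inv h).2.2.2.2.1
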